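/- arXiv:0709.2741 — 7 statements merged into one kernel-verified Lean document; each statement's English description precedes it below -/
import Mathlib

section
/- Let f₋, f₊, M : ℝ → ℝ be functions differentiable at a point R̄ > 0 with M(R̄) ≠ 0, and define V : ℝ → ℝ pointwise by V(R) = −((R²f₋(R) + R²f₊(R) − M(R)²)² − 4R⁴f₋(R)f₊(R))/(4M(R)²R²). If V(R̄) = f₊(R̄), then the derivatives agree: V′(R̄) = f₊′(R̄); similarly, if V(R̄) = f₋(R̄), then V′(R̄) = f₋′(R̄). That is, wherever the potential V touches one of the metric functions f₋ or f₊, it is tangent to that function. -/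
private lemma key_touch (fm fp M V : ℝ → ℝ) (Rb : ℝ) (hRb : 0 < Rb)
    (hfm : DifferentiableAt ℝ fm Rb) (hfp : DifferentiableAt ℝ fp Rb)
    (hM : DifferentiableAt ℝ M Rb) (hMRb : M Rb ≠ 0)
    (hV : ∀ R : ℝ, V R =
      -((R ^ 2 * fm R + R ^ 2 * fp R - (M R) ^ 2) ^ 2 - 4 * R ^ 4 * fm R * fp R) /
        (4 * (M R) ^ 2 * R ^ 2))
    (heq : V Rb = fp Rb) : deriv V Rb = deriv fp Rb := by
  set g : ℝ → ℝ := fun R => (R ^ 2 * fm R - R ^ 2 * fp R - (M R) ^ 2) / (2 * M R * R)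
    with hg_def
  have h1 : ∀ᶠ R in nhds Rb, M R ≠ 0 := hM.continuousAt.eventually_ne hMRb
  have h2 : ∀ᶠ R in nhds Rb, R ≠ 0 := eventually_ne_nhds hRb.ne'
  have hEq : V =ᶠ[nhds Rb] fun R => fp R - (g R) ^ 2 := by
    filter_upwards [h1, h2] with R hM0 hR0
    rw [hV R, hg_def]
    field_simp
    ring
  have hgR : DifferentiableAt ℝ g Rb := by
    apply DifferentiableAt.div
    · fun_prop
    · fun_prop
    · positivity
  have hg0 : g Rb = 0 := by
    have h := hEq.self_of_nhds
    simp only [heq] at h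
    have : g Rb ^ 2 = 0 := by linarith
    exact pow_eq_zero_iff (by norm_num) |>.mp this
  have hd : HasDerivAt (fun R => fp R - (g R) ^ 2)
      (deriv fp Rb - 2 * g Rb ^ 1 * deriv g Rb) Rb :=
    hfp.hasDerivAt.sub ((hgR.hasDerivAt.pow 2).congr_deriv (by norm_num))
  rw [hEq.deriv_eq, hd.deriv, hg0]
  ring

/-- Let `fm, fp, M : ℝ → ℝ` be differentiable at a point `Rb > 0` with
`M Rb ≠ 0`, and let `V : ℝ → ℝ` be given pointwise by
`V R = −((R²·fm R + R²·fp R − (M R)²)² − 4R⁴·(fm R)·(fp R))/(4(M R)²R²)`.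
If `V Rb = fp Rb` then `deriv V Rb = deriv fp Rb`; similarly, if `V Rb = fm Rb`
then `deriv V Rb = deriv fm Rb`: wherever the potential touches one of the metric
functions, it is tangent to it. -/
theorem stmt_2 (fm fp M V : ℝ → ℝ) (Rb : ℝ) (hRb : 0 < Rb)
    (hfm : DifferentiableAt ℝ fm Rb) (hfp : DifferentiableAt ℝ fp Rb)
    (hM : DifferentiableAt ℝ M Rb) (hMRb : M Rb ≠ 0)
    (hV : ∀ R : ℝ, V R =
      -((R ^ 2 * fm R + R ^ 2 * fp R - (M R) ^ 2) ^ 2 - 4 * R ^ 4 * fm R * fp R) /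
        (4 * (M R) ^ 2 * R ^ 2)) :
    (V Rb = fp Rb → deriv V Rb = deriv fp Rb) ∧
    (V Rb = fm Rb → deriv V Rb = deriv fm Rb) := by
  constructor
  · exact key_touch fm fp M V Rb hRb hfm hfp hM hMRb hV
  · refine key_touch fp fm M V Rb hRb hfp hfm hM hMRb (fun R => ?_)
    rw [hV R]; ring_nf
end

section
/- Let R > 0, Ṙ, f₋, f₊, M be real numbers with M ≠ 0, and let V = −((R²f₋ + R²f₊ − M²)² − 4R⁴f₋f₊)/(4M²R²). If the effective classical equation Ṙ² + V = 0 holds, then Ṙ² + f₋ ≥ 0 and Ṙ² + f₊ ≥ 0; i.e., the arguments of both radicals appearing in the junction condition are nonnegative, so the well-definedness of the radicals imposes no restriction on classical solutions. -/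
/-- Let `R > 0`, `Rd` (= Ṙ), `fm` (= f₋), `fp` (= f₊), `M ≠ 0` be reals,
and `V = −((R²fm + R²fp − M²)² − 4R⁴fm·fp)/(4M²R²)`. If the effective classical
equation `Rd² + V = 0` holds, then `Rd² + fm ≥ 0` and `Rd² + fp ≥ 0`: the arguments
of both radicals in the junction condition are nonnegative. -/
theorem stmt_8 (R Rd fm fp M V : ℝ) (hR : 0 < R) (hM : M ≠ 0)
    (hV : V = -((R ^ 2 * fm + R ^ 2 * fp - M ^ 2) ^ 2 - 4 * R ^ 4 * fm * fp) /
      (4 * M ^ 2 * R ^ 2))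
    (heq : Rd ^ 2 + V = 0) :
    0 ≤ Rd ^ 2 + fm ∧ 0 ≤ Rd ^ 2 + fp := by
  have hR2 : (0:ℝ) < R ^ 2 := by positivity
  have hM2 : (0:ℝ) < M ^ 2 := by positivity
  have hD : (0:ℝ) < 4 * M ^ 2 * R ^ 2 := by positivity
  subst hV
  have h : Rd ^ 2 * (4 * M ^ 2 * R ^ 2) +
      -((R ^ 2 * fm + R ^ 2 * fp - M ^ 2) ^ 2 - 4 * R ^ 4 * fm * fp) = 0 := by
    have := heq
    field_simp at this
    nlinarith [this]
  constructor
  · nlinarith [sq_nonneg (R ^ 2 * fm - R ^ 2 * fp + M ^ 2), hD, mul_pos hM2 hR2]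
  · nlinarith [sq_nonneg (R ^ 2 * fp - R ^ 2 * fm + M ^ 2), hD, mul_pos hM2 hR2]
end

section
/- Let R > 0, Ṙ, f₋, f₊, M be real numbers with M ≠ 0, V = −((R²f₋ + R²f₊ − M²)² − 4R⁴f₋f₊)/(4M²R²), ε₋ = sign(M(R²f₋ − R²f₊ + M²)), and ε₊ = sign(M(R²f₋ − R²f₊ − M²)). If the point lies along a classical solution, i.e. Ṙ² + V = 0, and ε₋ = 0 (respectively ε₊ = 0), then f₋ ≤ 0 (respectively f₊ ≤ 0). Hence along a classical solution the signs can only vanish in a region where the corresponding metric function is nonpositive (a T-region). -/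
/-- Let `R > 0`, `Rd` (= Ṙ), `fm` (= f₋), `fp` (= f₊), `M ≠ 0` be reals,
`V = −((R²fm + R²fp − M²)² − 4R⁴fm·fp)/(4M²R²)`,
`εm = sign(M(R²fm − R²fp + M²))`, `εp = sign(M(R²fm − R²fp − M²))`.
If `Rd² + V = 0` (a point on a classical solution) and `εm = 0` (resp. `εp = 0`),
then `fm ≤ 0` (resp. `fp ≤ 0`): along a classical solution the signs can only
vanish in a region where the corresponding metric function is nonpositive. -/
theorem stmt_9 (R Rd fm fp M V εm εp : ℝ) (hR : 0 < R) (hM : M ≠ 0)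
    (hV : V = -((R ^ 2 * fm + R ^ 2 * fp - M ^ 2) ^ 2 - 4 * R ^ 4 * fm * fp) /
      (4 * M ^ 2 * R ^ 2))
    (hεm : εm = Real.sign (M * (R ^ 2 * fm - R ^ 2 * fp + M ^ 2)))
    (hεp : εp = Real.sign (M * (R ^ 2 * fm - R ^ 2 * fp - M ^ 2)))
    (heq : Rd ^ 2 + V = 0) :
    (εm = 0 → fm ≤ 0) ∧ (εp = 0 → fp ≤ 0) := by
  have hM2 : (0:ℝ) < M ^ 2 := by positivity
  have hR2 : (0:ℝ) < R ^ 2 := by positivity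
  have hden : (4 * M ^ 2 * R ^ 2) ≠ 0 := by positivity
  have hVeq : V * (4 * M ^ 2 * R ^ 2) =
      -((R ^ 2 * fm + R ^ 2 * fp - M ^ 2) ^ 2 - 4 * R ^ 4 * fm * fp) := by
    rw [hV]; field_simp
  constructor
  · intro h
    rw [h] at hεm
    have h0 : M * (R ^ 2 * fm - R ^ 2 * fp + M ^ 2) = 0 :=
      Real.sign_eq_zero_iff.mp hεm.symm
    have h1 : R ^ 2 * fm - R ^ 2 * fp + M ^ 2 = 0 := by
      rcases mul_eq_zero.mp h0 with h | h
      · exact absurd h hM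
      · exact h
    have hVfm : V = fm := by
      have : V * (4 * M ^ 2 * R ^ 2) = fm * (4 * M ^ 2 * R ^ 2) := by
        rw [hVeq]; nlinarith [h1]
      exact mul_right_cancel₀ hden this
    nlinarith [sq_nonneg Rd]
  · intro h
    rw [h] at hεp
    have h0 : M * (R ^ 2 * fm - R ^ 2 * fp - M ^ 2) = 0 :=
      Real.sign_eq_zero_iff.mp hεp.symm
    have h1 : R ^ 2 * fm - R ^ 2 * fp - M ^ 2 = 0 := by
      rcases mul_eq_zero.mp h0 with h | h
      · exact absurd h hM
      · exact h
    have hVfp : V = fp := by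
      have : V * (4 * M ^ 2 * R ^ 2) = fp * (4 * M ^ 2 * R ^ 2) := by
        rw [hVeq]; nlinarith [h1]
      exact mul_right_cancel₀ hden this
    nlinarith [sq_nonneg Rd]
end

section
/- Let R > 0, f₋, f₊, M be real numbers with M ≠ 0, V = −((R²f₋ + R²f₊ − M²)² − 4R⁴f₋f₊)/(4M²R²), ε₋ = sign(M(R²f₋ − R²f₊ + M²)), and ε₊ = sign(M(R²f₋ − R²f₊ − M²)). If ε₋ = 0 and f₋ > 0 (respectively ε₊ = 0 and f₊ > 0), then V > 0; i.e., if a sign vanishes at a point where the corresponding metric function is positive, that point lies in the classically forbidden region, along a tunnelling trajectory. -/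
/-- Let `R > 0`, `fm` (= f₋), `fp` (= f₊), `M ≠ 0` be reals,
`V = −((R²fm + R²fp − M²)² − 4R⁴fm·fp)/(4M²R²)`,
`εm = sign(M(R²fm − R²fp + M²))`, `εp = sign(M(R²fm − R²fp − M²))`.
If `εm = 0` and `fm > 0` (resp. `εp = 0` and `fp > 0`), then `V > 0`: a sign
vanishing where the corresponding metric function is positive lies in the
classically forbidden region, along a tunnelling trajectory. -/
theorem stmt_10 (R fm fp M V εm εp : ℝ) (hR : 0 < R) (hM : M ≠ 0)
    (hV : V = -((R ^ 2 * fm + R ^ 2 * fp - M ^ 2) ^ 2 - 4 * R ^ 4 * fm * fp) /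
      (4 * M ^ 2 * R ^ 2))
    (hεm : εm = Real.sign (M * (R ^ 2 * fm - R ^ 2 * fp + M ^ 2)))
    (hεp : εp = Real.sign (M * (R ^ 2 * fm - R ^ 2 * fp - M ^ 2))) :
    (εm = 0 ∧ 0 < fm → 0 < V) ∧ (εp = 0 ∧ 0 < fp → 0 < V) := by
  have hden : 0 < 4 * M ^ 2 * R ^ 2 := by positivity
  constructor
  · rintro ⟨h0, hfm⟩
    have h1 : M * (R ^ 2 * fm - R ^ 2 * fp + M ^ 2) = 0 :=
      Real.sign_eq_zero_iff.mp (hεm ▸ h0)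
    have h2 : R ^ 2 * fm - R ^ 2 * fp + M ^ 2 = 0 := by
      rcases mul_eq_zero.mp h1 with h | h
      · exact absurd h hM
      · exact h
    have hnum : -((R ^ 2 * fm + R ^ 2 * fp - M ^ 2) ^ 2 - 4 * R ^ 4 * fm * fp)
        = 4 * R ^ 2 * fm * M ^ 2 := by nlinarith [sq_nonneg R]
    rw [hV, hnum]
    positivity
  · rintro ⟨h0, hfp⟩
    have h1 : M * (R ^ 2 * fm - R ^ 2 * fp - M ^ 2) = 0 :=
      Real.sign_eq_zero_iff.mp (hεp ▸ h0)
    have h2 : R ^ 2 * fm - R ^ 2 * fp - M ^ 2 = 0 := by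
      rcases mul_eq_zero.mp h1 with h | h
      · exact absurd h hM
      · exact h
    have hnum : -((R ^ 2 * fm + R ^ 2 * fp - M ^ 2) ^ 2 - 4 * R ^ 4 * fm * fp)
        = 4 * R ^ 2 * fp * M ^ 2 := by nlinarith [sq_nonneg R]
    rw [hV, hnum]
    positivity
end

section
/- Let R₀ > 0, f₋, f₊, M be real numbers with M ≠ 0, and let V = −((R₀²f₋ + R₀²f₊ − M²)² − 4R₀⁴f₋f₊)/(4M²R₀²). If R₀ is a turning point, i.e. V = 0, then f₋ ≥ 0 and f₊ ≥ 0. Hence turning points of the shell motion can only occur in the closure of an R-region of each of the two spacetimes. -/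
/-!
With `a = R₀²f₋`, `b = R₀²f₊`, `m = M² > 0`, a turning point means `(a + b - m)² = 4ab`.
This forces `ab ≥ 0`, and expanding it as `2m(a + b) = (a - b)² + m² > 0` gives `a + b > 0`;
together these make both `a` and `b` nonnegative.
-/

lemma nonneg_and_nonneg_of_mul_nonneg_of_add_pos {a b : ℝ} (hab : 0 ≤ a * b)
    (hsum : 0 < a + b) : 0 ≤ a ∧ 0 ≤ b := by
  rcases le_total 0 a with ha | ha
  · exact ⟨ha, by nlinarith⟩
  · exact ⟨by nlinarith, by nlinarith⟩

lemma nonneg_and_nonneg_of_sq_sub_eq_four_mul {a b m : ℝ} (hm : 0 < m)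
    (h : (a + b - m) ^ 2 - 4 * a * b = 0) : 0 ≤ a ∧ 0 ≤ b := by
  have hab : 0 ≤ a * b := by nlinarith [sq_nonneg (a + b - m)]
  have hsum : 0 < a + b := by nlinarith [sq_nonneg (a - b)]
  exact nonneg_and_nonneg_of_mul_nonneg_of_add_pos hab hsum

/-- Let `R₀ > 0`, `fm` (= f₋), `fp` (= f₊), `M ≠ 0` be reals, and
`V = −((R₀²fm + R₀²fp − M²)² − 4R₀⁴fm·fp)/(4M²R₀²)`. If `R₀` is a turning point,
i.e. `V = 0`, then `fm ≥ 0` and `fp ≥ 0`: turning points can only occur in the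
closure of an R-region of each of the two spacetimes. -/
theorem stmt_11 (R₀ fm fp M V : ℝ) (hR : 0 < R₀) (hM : M ≠ 0)
    (hV : V = -((R₀ ^ 2 * fm + R₀ ^ 2 * fp - M ^ 2) ^ 2 - 4 * R₀ ^ 4 * fm * fp) /
      (4 * M ^ 2 * R₀ ^ 2))
    (hturn : V = 0) :
    0 ≤ fm ∧ 0 ≤ fp := by
  have hR2 : 0 < R₀ ^ 2 := by positivity
  have hnum : (R₀ ^ 2 * fm + R₀ ^ 2 * fp - M ^ 2) ^ 2
      - 4 * (R₀ ^ 2 * fm) * (R₀ ^ 2 * fp) = 0 := by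
    rw [hturn, eq_comm, div_eq_zero_iff, neg_eq_zero] at hV
    rcases hV with hV | hV
    · linear_combination hV
    · exact absurd hV (by positivity)
  obtain ⟨hm, hp⟩ := nonneg_and_nonneg_of_sq_sub_eq_four_mul (by positivity) hnum
  exact ⟨nonneg_of_mul_nonneg_right hm hR2, nonneg_of_mul_nonneg_right hp hR2⟩
end

section
/- Let R > 0, Ṙ, f₋, f₊, M be real numbers with M ≠ 0, let V = −((R²f₋ + R²f₊ − M²)² − 4R⁴f₋f₊)/(4M²R²), and suppose Ṙ² + V = 0. Define ε₋ = sign(M(R²f₋ − R²f₊ + M²)) and ε₊ = sign(M(R²f₋ − R²f₊ − M²)), where sign x = 1, 0, −1 according as x > 0, x = 0, x < 0. Then Ṙ² + f₋ ≥ 0, Ṙ² + f₊ ≥ 0, and the junction condition R(ε₋√(Ṙ² + f₋) − ε₊√(Ṙ² + f₊)) = M holds. Together with the converse implication, this shows the junction condition is completely equivalent to the energy equation supplemented by the sign formulas. -/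
/-! With `A₋ = R²f₋ − R²f₊ + M²` and `A₊ = R²f₋ − R²f₊ − M²`, the energy equation is equivalent to
`4M²R²(Ṙ² + f±) = A±²`, so both radicands are squares and `√(Ṙ² + f±) = |A±| / (2|M|R)`.
Since `ε± = sign(M A±)` is the sign of `A± / (2MR)`, we get `ε± √(Ṙ² + f±) = A± / (2MR)`, and the
junction condition reduces to `A₋ − A₊ = 2M²`. -/

namespace Real

theorem sign_mul_abs (r : ℝ) : sign r * |r| = r := by
  rcases lt_trichotomy r 0 with hr | rfl | hr
  · rw [sign_of_neg hr, abs_of_neg hr, neg_one_mul, neg_neg]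
  · rw [abs_zero, mul_zero]
  · rw [sign_of_pos hr, abs_of_pos hr, one_mul]

theorem sign_mul_of_pos_right (r : ℝ) {c : ℝ} (hc : 0 < c) : sign (r * c) = sign r := by
  rcases lt_trichotomy r 0 with hr | rfl | hr
  · rw [sign_of_neg hr, sign_of_neg (mul_neg_of_neg_of_pos hr hc)]
  · rw [zero_mul]
  · rw [sign_of_pos hr, sign_of_pos (mul_pos hr hc)]

theorem sign_mul_mul_abs_div {a c : ℝ} (x : ℝ) (h : 0 < a * c) :
    sign (a * x) * |x / c| = x / c := by
  have ha : a ≠ 0 := left_ne_zero_of_mul h.ne'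
  have hc : c ≠ 0 := right_ne_zero_of_mul h.ne'
  have hx : x / c = a * x * (a * c)⁻¹ := by field_simp
  rw [hx, ← sign_mul_of_pos_right (a * x) (inv_pos.2 h), sign_mul_abs]

end Real

theorem sq_add_eq_sq_div_of_energy {R Rd fm fp M : ℝ} (hR : R ≠ 0) (hM : M ≠ 0)
    (h : Rd ^ 2 - ((R ^ 2 * fm + R ^ 2 * fp - M ^ 2) ^ 2 - 4 * R ^ 4 * fm * fp) /
      (4 * M ^ 2 * R ^ 2) = 0) :
    Rd ^ 2 + fm = ((R ^ 2 * fm - R ^ 2 * fp + M ^ 2) / (2 * M * R)) ^ 2 := by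
  field_simp at h ⊢
  linear_combination h

/-- Let `R > 0`, `Rd` (= Ṙ), `fm` (= f₋), `fp` (= f₊), `M ≠ 0` be reals,
`V = −((R²fm + R²fp − M²)² − 4R⁴fm·fp)/(4M²R²)`, and suppose `Rd² + V = 0`.
With `εm = sign(M(R²fm − R²fp + M²))` and `εp = sign(M(R²fm − R²fp − M²))`, we have
`Rd² + fm ≥ 0`, `Rd² + fp ≥ 0`, and the junction condition
`R(εm√(Rd² + fm) − εp√(Rd² + fp)) = M` holds. -/
theorem stmt_14 (R Rd fm fp M V εm εp : ℝ) (hR : 0 < R) (hM : M ≠ 0)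
    (hV : V = -((R ^ 2 * fm + R ^ 2 * fp - M ^ 2) ^ 2 - 4 * R ^ 4 * fm * fp) /
      (4 * M ^ 2 * R ^ 2))
    (heq : Rd ^ 2 + V = 0)
    (hεm : εm = Real.sign (M * (R ^ 2 * fm - R ^ 2 * fp + M ^ 2)))
    (hεp : εp = Real.sign (M * (R ^ 2 * fm - R ^ 2 * fp - M ^ 2))) :
    0 ≤ Rd ^ 2 + fm ∧ 0 ≤ Rd ^ 2 + fp ∧
    R * (εm * Real.sqrt (Rd ^ 2 + fm) - εp * Real.sqrt (Rd ^ 2 + fp)) = M := by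
  subst hV hεm hεp
  have hm : Rd ^ 2 + fm = ((R ^ 2 * fm - R ^ 2 * fp + M ^ 2) / (2 * M * R)) ^ 2 :=
    sq_add_eq_sq_div_of_energy hR.ne' hM (by linear_combination heq)
  have hp : Rd ^ 2 + fp = ((R ^ 2 * fm - R ^ 2 * fp - M ^ 2) / (2 * M * R)) ^ 2 := by
    rw [sq_add_eq_sq_div_of_energy (fm := fp) (fp := fm) hR.ne' hM (by linear_combination heq)]
    ring
  have hMR : 0 < M * (2 * M * R) := by nlinarith [sq_pos_of_ne_zero hM]
  refine ⟨hm ▸ sq_nonneg _, hp ▸ sq_nonneg _, ?_⟩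
  rw [hm, hp, Real.sqrt_sq_eq_abs, Real.sqrt_sq_eq_abs, Real.sign_mul_mul_abs_div _ hMR,
    Real.sign_mul_mul_abs_div _ hMR]
  field_simp
  ring
end

section
/- Let R > 0, f₋, f₊, M be real numbers with M ≠ 0, let V = −((R²f₋ + R²f₊ − M²)² − 4R⁴f₋f₊)/(4M²R²), and let R′ be a real number with (R′)² = V (a point on a tunnelling trajectory, where R′ is the derivative with respect to Euclidean proper time). Then f₋ − (R′)² ≥ 0 and f₊ − (R′)² ≥ 0, so the radicals √(f± − (R′)²) appearing in the Euclidean effective momentum are well defined; moreover f₋ − (R′)² = 0 if and only if ε₋ = 0 and f₊ − (R′)² = 0 if and only if ε₊ = 0, where ε₋ = sign(M(R²f₋ − R²f₊ + M²)) and ε₊ = sign(M(R²f₋ − R²f₊ − M²)). -/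
/-- Let `R > 0`, `fm` (= f₋), `fp` (= f₊), `M ≠ 0` be reals,
`V = −((R²fm + R²fp − M²)² − 4R⁴fm·fp)/(4M²R²)`, and let `R'` be a real with
`(R')² = V` (a point on a tunnelling trajectory). Then `fm − (R')² ≥ 0` and
`fp − (R')² ≥ 0`, so the radicals in the Euclidean effective momentum are well
defined; moreover `fm − (R')² = 0` iff `εm = 0` and `fp − (R')² = 0` iff `εp = 0`,
where `εm = sign(M(R²fm − R²fp + M²))` and `εp = sign(M(R²fm − R²fp − M²))`. -/
theorem stmt_16 (R fm fp M V R' εm εp : ℝ) (hR : 0 < R) (hM : M ≠ 0)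
    (hV : V = -((R ^ 2 * fm + R ^ 2 * fp - M ^ 2) ^ 2 - 4 * R ^ 4 * fm * fp) /
      (4 * M ^ 2 * R ^ 2))
    (htun : R' ^ 2 = V)
    (hεm : εm = Real.sign (M * (R ^ 2 * fm - R ^ 2 * fp + M ^ 2)))
    (hεp : εp = Real.sign (M * (R ^ 2 * fm - R ^ 2 * fp - M ^ 2))) :
    (0 ≤ fm - R' ^ 2 ∧ 0 ≤ fp - R' ^ 2) ∧
    (fm - R' ^ 2 = 0 ↔ εm = 0) ∧ (fp - R' ^ 2 = 0 ↔ εp = 0) := by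
  have hR2 : (R:ℝ)^2 ≠ 0 := pow_ne_zero _ hR.ne'
  have hM2 : (M:ℝ)^2 ≠ 0 := pow_ne_zero _ hM
  have hden : (4 * M ^ 2 * R ^ 2) ≠ 0 := by positivity
  have hm : fm - R' ^ 2 = (R ^ 2 * fm - R ^ 2 * fp + M ^ 2) ^ 2 / (4 * M ^ 2 * R ^ 2) := by
    rw [htun, hV]; field_simp; ring
  have hp : fp - R' ^ 2 = (R ^ 2 * fm - R ^ 2 * fp - M ^ 2) ^ 2 / (4 * M ^ 2 * R ^ 2) := by
    rw [htun, hV]; field_simp; ring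
  have hpos : (0:ℝ) < 4 * M ^ 2 * R ^ 2 := by positivity
  refine ⟨⟨by rw [hm]; positivity, by rw [hp]; positivity⟩, ?_, ?_⟩
  · rw [hm, hεm, Real.sign_eq_zero_iff]
    simp [div_eq_zero_iff, hden, pow_eq_zero_iff, mul_eq_zero, hM]
  · rw [hp, hεp, Real.sign_eq_zero_iff]
    simp [div_eq_zero_iff, hden, pow_eq_zero_iff, mul_eq_zero, hM]
end
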